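/- (Theorem 3.1.11, Saks–Henstock lemma) Let a < b be real numbers, let f : [a,b] → ℝ be gauge integrable over [a,b], and for u < v in [a,b] write F(u,v) for the gauge integral of f over [u,v]. Given ε > 0, let δ be a gauge on [a,b] such that every δ-fine tagged division D of [a,b] satisfies |Σ_{([u,v],x)∈D} f(x)(v − u) − F(a,b)| < ε. Then: (i) for every subset D₁ of such a δ-fine division D, |Σ_{([u,v],x)∈D₁} (f(x)(v − u) − F(u,v))| ≤ ε; and (ii) Σ_{([u,v],x)∈D} |f(x)(v − u) − F(u,v)| ≤ 2ε. -/

import Mathlib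

/-- A tagged division of `[a, b]`: points `a = u 0 < u 1 < ⋯ < u n = b`
together with tags `t j ∈ [u j, u (j+1)]` for `j = 0, …, n-1`. -/
structure TaggedDiv (a b : ℝ) where
  n : ℕ
  u : ℕ → ℝ
  t : ℕ → ℝ
  n_pos : 0 < n
  left : u 0 = a
  right : u n = b
  mono : ∀ j < n, u j < u (j + 1)
  tag_mem : ∀ j < n, t j ∈ Set.Icc (u j) (u (j + 1))

/-- A tagged division is `δ`-fine if each interval `[u j, u (j+1)]` is contained in
`(t j - δ (t j), t j + δ (t j))`. -/
def TaggedDiv.IsFine {a b : ℝ} (δ : ℝ → ℝ) (D : TaggedDiv a b) : Prop :=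
  ∀ j < D.n,
    Set.Icc (D.u j) (D.u (j + 1)) ⊆ Set.Ioo (D.t j - δ (D.t j)) (D.t j + δ (D.t j))

/-- The Riemann sum of `f` over a tagged division. -/
noncomputable def TaggedDiv.riemannSum {a b : ℝ} (D : TaggedDiv a b) (f : ℝ → ℝ) : ℝ :=
  ∑ j ∈ Finset.range D.n, f (D.t j) * (D.u (j + 1) - D.u j)

/-- A gauge on `[a, b]`: a function positive at each point of `[a, b]`. -/
def IsGauge (a b : ℝ) (δ : ℝ → ℝ) : Prop :=
  ∀ x ∈ Set.Icc a b, 0 < δ x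

/-- `F` is the gauge (Henstock–Kurzweil) integral of `f` over `[a, b]`. -/
def HKIntegral (a b : ℝ) (f : ℝ → ℝ) (F : ℝ) : Prop :=
  ∀ ε > 0, ∃ δ : ℝ → ℝ, IsGauge a b δ ∧
    ∀ D : TaggedDiv a b, D.IsFine δ → |D.riemannSum f - F| < ε

namespace TaggedDiv
variable {a b c : ℝ}

theorem u_le_u (D : TaggedDiv a b) : ∀ {j k : ℕ}, j ≤ k → k ≤ D.n → D.u j ≤ D.u k := by
  intro j k hjk hk
  induction k with
  | zero => simp_all
  | succ k ih =>
    rcases Nat.lt_succ_iff_lt_or_eq.mp (Nat.lt_succ_of_le hjk) with h | h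
    · exact (ih (Nat.lt_succ_iff.mp h) (le_of_lt hk)).trans
        (le_of_lt (D.mono k hk))
    · exact h ▸ le_refl _

theorem u_mem (D : TaggedDiv a b) {j : ℕ} (hj : j ≤ D.n) : D.u j ∈ Set.Icc a b := by
  constructor
  · have h := D.u_le_u (Nat.zero_le j) hj
    rw [D.left] at h; exact h
  · have h := D.u_le_u hj (le_refl _)
    rw [D.right] at h; exact h

def cast {a' b' : ℝ} (h1 : a = a') (h2 : b = b') (D : TaggedDiv a b) : TaggedDiv a' b' where
  n := D.n
  u := D.u
  t := D.t
  n_pos := D.n_pos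
  left := by rw [← h1]; exact D.left
  right := by rw [← h2]; exact D.right
  mono := D.mono
  tag_mem := D.tag_mem

@[simp] theorem isFine_cast {a' b' : ℝ} (h1 : a = a') (h2 : b = b') (D : TaggedDiv a b)
    (δ : ℝ → ℝ) : (D.cast h1 h2).IsFine δ ↔ D.IsFine δ := Iff.rfl

@[simp] theorem riemannSum_cast {a' b' : ℝ} (h1 : a = a') (h2 : b = b') (D : TaggedDiv a b)
    (f : ℝ → ℝ) : (D.cast h1 h2).riemannSum f = D.riemannSum f := rfl

def single (hab : a < b) (t : ℝ) (ht : t ∈ Set.Icc a b) : TaggedDiv a b where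
  n := 1
  u := fun j => if j = 0 then a else b
  t := fun _ => t
  n_pos := one_pos
  left := rfl
  right := rfl
  mono := by
    intro j hj
    have hj0 : j = 0 := by omega
    subst hj0
    simpa using hab
  tag_mem := by
    intro j hj
    have hj0 : j = 0 := by omega
    subst hj0
    simpa using ht

@[simp] theorem riemannSum_single (hab : a < b) (t : ℝ) (ht : t ∈ Set.Icc a b) (f : ℝ → ℝ) :
    (single hab t ht).riemannSum f = f t * (b - a) := by
  simp [riemannSum, single]

theorem isFine_single (hab : a < b) (t : ℝ) (ht : t ∈ Set.Icc a b) (δ : ℝ → ℝ)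
    (h : Set.Icc a b ⊆ Set.Ioo (t - δ t) (t + δ t)) : (single hab t ht).IsFine δ := by
  intro j hj
  have hn : (single hab t ht).n = 1 := rfl
  have hj0 : j = 0 := by omega
  subst hj0
  simpa [single] using h

theorem IsFine.mono_gauge {D : TaggedDiv a b} {γ γ' : ℝ → ℝ} (h : D.IsFine γ)
    (hle : ∀ x, γ x ≤ γ' x) : D.IsFine γ' := by
  intro j hj x hx
  obtain ⟨h1, h2⟩ := h j hj hx
  constructor
  · linarith [hle (D.t j)]
  · linarith [hle (D.t j)]

def concat (D1 : TaggedDiv a b) (D2 : TaggedDiv b c) : TaggedDiv a c where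
  n := D1.n + D2.n
  u := fun j => if j ≤ D1.n then D1.u j else D2.u (j - D1.n)
  t := fun j => if j < D1.n then D1.t j else D2.t (j - D1.n)
  n_pos := Nat.add_pos_left D1.n_pos _
  left := by simp [D1.left]
  right := by
    have h2 := D2.n_pos
    rw [if_neg (show ¬ (D1.n + D2.n ≤ D1.n) by omega)]
    simp [D2.right]
  mono := by
    intro j hj
    rcases lt_trichotomy j D1.n with h | h | h
    · rw [if_pos (le_of_lt h), if_pos (show j + 1 ≤ D1.n from h)]
      exact D1.mono j h
    · rw [if_pos (le_of_eq h), if_neg (show ¬ (j + 1 ≤ D1.n) by omega),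
        show j + 1 - D1.n = 1 by omega, h, D1.right]
      have h0 := D2.mono 0 (show 0 < D2.n by omega)
      rw [D2.left] at h0
      exact h0
    · rw [if_neg (show ¬ (j ≤ D1.n) by omega), if_neg (show ¬ (j + 1 ≤ D1.n) by omega),
        show j + 1 - D1.n = (j - D1.n) + 1 by omega]
      exact D2.mono (j - D1.n) (by omega)
  tag_mem := by
    intro j hj
    rcases lt_or_ge j D1.n with h | h
    · rw [if_pos h, if_pos (le_of_lt h), if_pos (show j + 1 ≤ D1.n from h)]
      exact D1.tag_mem j h
    · rw [if_neg (show ¬ (j < D1.n) by omega),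
        if_neg (show ¬ (j + 1 ≤ D1.n) by omega),
        show j + 1 - D1.n = (j - D1.n) + 1 by omega]
      rcases eq_or_lt_of_le h with he | hl
      · rw [if_pos (le_of_eq he.symm), ← he, Nat.sub_self, D1.right]
        have h0 := D2.tag_mem 0 (show 0 < D2.n by omega)
        rw [D2.left] at h0
        exact h0
      · rw [if_neg (show ¬ (j ≤ D1.n) by omega)]
        exact D2.tag_mem (j - D1.n) (by omega)

theorem concat_u_le (D1 : TaggedDiv a b) (D2 : TaggedDiv b c) {j : ℕ} (h : j ≤ D1.n) :
    (D1.concat D2).u j = D1.u j := if_pos h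

theorem concat_u_ge (D1 : TaggedDiv a b) (D2 : TaggedDiv b c) {j : ℕ} (h : D1.n ≤ j) :
    (D1.concat D2).u j = D2.u (j - D1.n) := by
  rcases eq_or_lt_of_le h with he | hl
  · show (if j ≤ D1.n then D1.u j else D2.u (j - D1.n)) = _
    rw [if_pos (le_of_eq he.symm), ← he, Nat.sub_self, D1.right, D2.left]
  · exact if_neg (by omega)

theorem concat_t_lt (D1 : TaggedDiv a b) (D2 : TaggedDiv b c) {j : ℕ} (h : j < D1.n) :
    (D1.concat D2).t j = D1.t j := if_pos h

theorem concat_t_ge (D1 : TaggedDiv a b) (D2 : TaggedDiv b c) {j : ℕ} (h : D1.n ≤ j) :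
    (D1.concat D2).t j = D2.t (j - D1.n) := if_neg (by omega)

theorem riemannSum_concat (D1 : TaggedDiv a b) (D2 : TaggedDiv b c) (f : ℝ → ℝ) :
    (D1.concat D2).riemannSum f = D1.riemannSum f + D2.riemannSum f := by
  show ∑ j ∈ Finset.range (D1.n + D2.n), _ = _
  rw [Finset.sum_range_add]
  congr 1
  · apply Finset.sum_congr rfl
    intro j hj
    have hj' : j < D1.n := Finset.mem_range.mp hj
    rw [concat_t_lt D1 D2 hj', concat_u_le D1 D2 (le_of_lt hj'),
      concat_u_le D1 D2 (show j + 1 ≤ D1.n from hj')]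
  · apply Finset.sum_congr rfl
    intro i _
    rw [concat_t_ge D1 D2 (show D1.n ≤ D1.n + i by omega),
      concat_u_ge D1 D2 (show D1.n ≤ D1.n + i by omega),
      concat_u_ge D1 D2 (show D1.n ≤ D1.n + i + 1 by omega),
      show D1.n + i - D1.n = i by omega, show D1.n + i + 1 - D1.n = i + 1 by omega]

theorem IsFine.concat {D1 : TaggedDiv a b} {D2 : TaggedDiv b c} {δ : ℝ → ℝ}
    (h1 : D1.IsFine δ) (h2 : D2.IsFine δ) : (D1.concat D2).IsFine δ := by
  intro j hj
  have hj' : j < D1.n + D2.n := hj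
  rcases lt_or_ge j D1.n with h | h
  · rw [concat_t_lt D1 D2 h, concat_u_le D1 D2 (le_of_lt h),
      concat_u_le D1 D2 (show j + 1 ≤ D1.n from h)]
    exact h1 j h
  · rw [concat_t_ge D1 D2 h, concat_u_ge D1 D2 h,
      concat_u_ge D1 D2 (show D1.n ≤ j + 1 by omega),
      show j + 1 - D1.n = (j - D1.n) + 1 by omega]
    exact h2 (j - D1.n) (by omega)

end TaggedDiv

theorem cousin {a b : ℝ} (hab : a < b) {δ : ℝ → ℝ} (hδ : IsGauge a b δ) :
    ∃ D : TaggedDiv a b, D.IsFine δ := by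
  classical
  set A : Set ℝ := {x | a < x ∧ x ≤ b ∧ ∃ D : TaggedDiv a x, D.IsFine δ} with hA
  have hδa : 0 < δ a := hδ a ⟨le_refl a, hab.le⟩
  have hx0 : min b (a + δ a / 2) ∈ A := by
    have h1 : a < min b (a + δ a / 2) := lt_min hab (by linarith)
    have h2 : min b (a + δ a / 2) ≤ b := min_le_left _ _
    refine ⟨h1, h2, TaggedDiv.single h1 a ⟨le_refl a, h1.le⟩, ?_⟩
    apply TaggedDiv.isFine_single
    intro y hy
    have hy2 := hy.2
    have := min_le_right b (a + δ a / 2)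
    exact ⟨by linarith [hy.1], by linarith⟩
  have hne : A.Nonempty := ⟨_, hx0⟩
  have hbdd : BddAbove A := ⟨b, fun x hx => hx.2.1⟩
  set c := sSup A with hc
  have hac : a < c := lt_of_lt_of_le hx0.1 (le_csSup hbdd hx0)
  have hcb : c ≤ b := csSup_le hne (fun x hx => hx.2.1)
  have hδc : 0 < δ c := hδ c ⟨hac.le, hcb⟩
  obtain ⟨x, hxA, hxc⟩ := exists_lt_of_lt_csSup hne (show c - δ c < c by linarith)
  have hxle : x ≤ c := le_csSup hbdd hxA
  obtain ⟨hax, hxb, D, hD⟩ := hxA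
  by_cases hxb' : x = b
  · exact ⟨D.cast rfl hxb', hD⟩
  have hxb2 : x < b := lt_of_le_of_ne hxb hxb'
  set y := min b (c + δ c / 2) with hy
  have hxy : x < y := lt_min hxb2 (by linarith)
  have hcy : c ≤ y := le_min hcb (by linarith)
  have hyc2 : y ≤ c + δ c / 2 := min_le_right _ _
  have hfine : (TaggedDiv.single hxy c ⟨hxle, hcy⟩).IsFine δ := by
    apply TaggedDiv.isFine_single
    intro z hz
    exact ⟨by linarith [hz.1], by linarith [hz.2]⟩
  have hDy : (D.concat (TaggedDiv.single hxy c ⟨hxle, hcy⟩)).IsFine δ := hD.concat hfine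
  by_cases hyb : y = b
  · exact ⟨(D.concat _).cast rfl hyb, hDy⟩
  · exfalso
    have hyA : y ∈ A := ⟨lt_trans hax hxy, min_le_left _ _, _, hDy⟩
    have hyc : y ≤ c := le_csSup hbdd hyA
    have hyb2 : y < b := lt_of_le_of_ne (min_le_left _ _) hyb
    rcases le_or_gt (c + δ c / 2) b with h | h
    · have : y = c + δ c / 2 := min_eq_right h
      linarith
    · have : y = b := min_eq_left h.le
      exact hyb this

theorem TaggedDiv.glue {a b : ℝ} (D : TaggedDiv a b) (γ : ℝ → ℝ) (f : ℝ → ℝ) (s : ℕ → ℝ)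
    (P : ∀ j, j < D.n → TaggedDiv (D.u j) (D.u (j + 1)))
    (hP : ∀ j (h : j < D.n), (P j h).IsFine γ)
    (hs : ∀ j (h : j < D.n), s j = (P j h).riemannSum f) :
    ∃ C : TaggedDiv a b, C.IsFine γ ∧ C.riemannSum f = ∑ j ∈ Finset.range D.n, s j := by
  have key : ∀ k, 1 ≤ k → k ≤ D.n → ∃ C : TaggedDiv (D.u 0) (D.u k),
      C.IsFine γ ∧ C.riemannSum f = ∑ j ∈ Finset.range k, s j := by
    intro k
    induction k with
    | zero => intro h1 _; exact absurd h1 (by omega)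
    | succ k ih =>
      intro h1 hk
      rcases Nat.eq_zero_or_pos k with hk0 | hk1
      · subst hk0
        exact ⟨P 0 (by omega), hP 0 (by omega),
          by rw [Finset.sum_range_one, hs 0 (by omega)]⟩
      · obtain ⟨C, hC1, hC2⟩ := ih (by omega) (by omega)
        refine ⟨C.concat (P k (by omega)), hC1.concat (hP k (by omega)), ?_⟩
        rw [TaggedDiv.riemannSum_concat, hC2, Finset.sum_range_succ, hs k (by omega)]
  obtain ⟨C, h1, h2⟩ := key D.n D.n_pos (le_refl _)
  exact ⟨C.cast D.left D.right, h1, h2⟩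

theorem F_additive (a b : ℝ) (f : ℝ → ℝ) (F : ℝ → ℝ → ℝ)
    (hF : ∀ u v : ℝ, a ≤ u → u < v → v ≤ b → HKIntegral u v f (F u v))
    (hab : a < b) (D : TaggedDiv a b) :
    F a b = ∑ j ∈ Finset.range D.n, F (D.u j) (D.u (j + 1)) := by
  classical
  have hn0 : (0:ℝ) < D.n := by exact_mod_cast D.n_pos
  have key : ∀ η > 0, |∑ j ∈ Finset.range D.n, F (D.u j) (D.u (j + 1)) - F a b| < η := by
    intro η hη
    obtain ⟨δ0, hδ0, hδ0'⟩ := hF a b le_rfl hab le_rfl (η / 2) (by linarith)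
    have hsub : ∀ j, j < D.n → ∃ Pj : TaggedDiv (D.u j) (D.u (j + 1)),
        Pj.IsFine δ0 ∧ |Pj.riemannSum f - F (D.u j) (D.u (j + 1))| < η / (2 * D.n) := by
      intro j h
      have hj1 : a ≤ D.u j := (D.u_mem (le_of_lt h)).1
      have hj2 : D.u (j + 1) ≤ b := (D.u_mem h).2
      have hmono := D.mono j h
      obtain ⟨δj, hδj, hδj'⟩ := hF (D.u j) (D.u (j + 1)) hj1 hmono hj2 (η / (2 * D.n))
        (by positivity)
      obtain ⟨Pj, hPj⟩ := cousin hmono (δ := fun x => min (δ0 x) (δj x)) (fun x hx =>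
        lt_min (hδ0 x ⟨hj1.trans hx.1, hx.2.trans hj2⟩) (hδj x hx))
      exact ⟨Pj, hPj.mono_gauge (fun x => min_le_left _ _),
        hδj' Pj (hPj.mono_gauge (fun x => min_le_right _ _))⟩
    choose P hP1 hP2 using hsub
    obtain ⟨C, hC1, hC2⟩ := D.glue δ0 f
      (fun j => if h : j < D.n then (P j h).riemannSum f else 0) P hP1
      (fun j h => by rw [dif_pos h])
    have h1 := hδ0' C hC1
    rw [hC2] at h1
    set s : ℕ → ℝ := fun j => if h : j < D.n then (P j h).riemannSum f else 0 with hsdef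
    have h2 : ∑ j ∈ Finset.range D.n, |F (D.u j) (D.u (j + 1)) - s j| < η / 2 := by
      have hlt : ∀ j ∈ Finset.range D.n,
          |F (D.u j) (D.u (j + 1)) - s j| < η / (2 * D.n) := by
        intro j hj
        have hj' := Finset.mem_range.mp hj
        rw [hsdef]
        simp only [dif_pos hj']
        rw [abs_sub_comm]
        exact hP2 j hj'
      calc ∑ j ∈ Finset.range D.n, |F (D.u j) (D.u (j + 1)) - s j|
          < ∑ _j ∈ Finset.range D.n, η / (2 * D.n) :=
            Finset.sum_lt_sum_of_nonempty ⟨0, Finset.mem_range.mpr D.n_pos⟩ hlt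
        _ = D.n * (η / (2 * D.n)) := by rw [Finset.sum_const, Finset.card_range, nsmul_eq_mul]
        _ = η / 2 := by field_simp
    have h3 : |∑ j ∈ Finset.range D.n, F (D.u j) (D.u (j + 1)) -
        ∑ j ∈ Finset.range D.n, s j| ≤
        ∑ j ∈ Finset.range D.n, |F (D.u j) (D.u (j + 1)) - s j| := by
      rw [← Finset.sum_sub_distrib]
      exact Finset.abs_sum_le_sum_abs _ _
    calc |∑ j ∈ Finset.range D.n, F (D.u j) (D.u (j + 1)) - F a b|
        ≤ |∑ j ∈ Finset.range D.n, F (D.u j) (D.u (j + 1)) -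
            ∑ j ∈ Finset.range D.n, s j| + |∑ j ∈ Finset.range D.n, s j - F a b| := by
          have := abs_sub_le (∑ j ∈ Finset.range D.n, F (D.u j) (D.u (j + 1)))
            (∑ j ∈ Finset.range D.n, s j) (F a b)
          linarith
      _ < η / 2 + η / 2 := by
          have := lt_of_le_of_lt h3 h2
          linarith
      _ = η := by ring
  by_contra hne
  have hpos : 0 < |∑ j ∈ Finset.range D.n, F (D.u j) (D.u (j + 1)) - F a b| := by
    rw [abs_pos, sub_ne_zero]
    exact fun h => hne h.symm
  exact lt_irrefl _ (key _ hpos)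

/-- **Theorem 3.1.11 (Saks–Henstock lemma).** If every `δ`-fine division has Riemann sum
within `ε` of the integral, then partial sums of the local discrepancies are at most `ε`,
and the sum of their absolute values is at most `2ε`. -/
theorem saks_henstock (a b : ℝ) (hab : a < b) (f : ℝ → ℝ) (F : ℝ → ℝ → ℝ)
    (hF : ∀ u v : ℝ, a ≤ u → u < v → v ≤ b → HKIntegral u v f (F u v))
    (ε : ℝ) (hε : 0 < ε) (δ : ℝ → ℝ) (hδ : IsGauge a b δ)
    (hδε : ∀ D : TaggedDiv a b, D.IsFine δ → |D.riemannSum f - F a b| < ε) :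
    ∀ D : TaggedDiv a b, D.IsFine δ →
      (∀ S ⊆ Finset.range D.n,
        |∑ j ∈ S, (f (D.t j) * (D.u (j + 1) - D.u j) - F (D.u j) (D.u (j + 1)))| ≤ ε) ∧
      (∑ j ∈ Finset.range D.n,
        |f (D.t j) * (D.u (j + 1) - D.u j) - F (D.u j) (D.u (j + 1))|) ≤ 2 * ε := by
  classical
  intro D hD
  set d : ℕ → ℝ := fun j => f (D.t j) * (D.u (j + 1) - D.u j) - F (D.u j) (D.u (j + 1))
    with hd
  have hn0 : (0:ℝ) < D.n := by exact_mod_cast D.n_pos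
  have hadd := F_additive a b f F hF hab D
  have part1 : ∀ S ⊆ Finset.range D.n, |∑ j ∈ S, d j| ≤ ε := by
    intro S hS
    have key : ∀ η > 0, |∑ j ∈ S, d j| < ε + η := by
      intro η hη
      -- build pieces
      have hsub : ∀ j, j < D.n → ∃ Pj : TaggedDiv (D.u j) (D.u (j + 1)),
          Pj.IsFine δ ∧ (j ∈ S → Pj.riemannSum f = f (D.t j) * (D.u (j + 1) - D.u j)) ∧
          (j ∉ S → |Pj.riemannSum f - F (D.u j) (D.u (j + 1))| < η / D.n) := by
        intro j h
        have hj1 : a ≤ D.u j := (D.u_mem (le_of_lt h)).1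
        have hj2 : D.u (j + 1) ≤ b := (D.u_mem h).2
        have hmono := D.mono j h
        by_cases hjS : j ∈ S
        · refine ⟨TaggedDiv.single hmono (D.t j) (D.tag_mem j h), ?_, ?_, ?_⟩
          · exact TaggedDiv.isFine_single hmono _ _ δ (hD j h)
          · intro _; rw [TaggedDiv.riemannSum_single]
          · intro hc; exact absurd hjS hc
        · obtain ⟨δj, hδj, hδj'⟩ := hF (D.u j) (D.u (j + 1)) hj1 hmono hj2 (η / D.n)
            (by positivity)
          obtain ⟨Pj, hPj⟩ := cousin hmono (δ := fun x => min (δ x) (δj x)) (fun x hx =>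
            lt_min (hδ x ⟨hj1.trans hx.1, hx.2.trans hj2⟩) (hδj x hx))
          refine ⟨Pj, hPj.mono_gauge (fun x => min_le_left _ _), ?_, ?_⟩
          · intro hc; exact absurd hc hjS
          · intro _; exact hδj' Pj (hPj.mono_gauge (fun x => min_le_right _ _))
      choose P hP1 hPin hPout using hsub
      obtain ⟨C, hC1, hC2⟩ := D.glue δ f
        (fun j => if h : j < D.n then (P j h).riemannSum f else 0) P hP1
        (fun j h => by rw [dif_pos h])
      have h1 := hδε C hC1
      rw [hC2, hadd] at h1
      set s : ℕ → ℝ := fun j => if h : j < D.n then (P j h).riemannSum f else 0 with hsdef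
      rw [← Finset.sum_sub_distrib] at h1
      -- split the range sum
      have hsplit : ∑ j ∈ Finset.range D.n \ S, (s j - F (D.u j) (D.u (j + 1))) +
          ∑ j ∈ S, (s j - F (D.u j) (D.u (j + 1))) =
          ∑ j ∈ Finset.range D.n, (s j - F (D.u j) (D.u (j + 1))) :=
        Finset.sum_sdiff hS
      have hSd : ∑ j ∈ S, (s j - F (D.u j) (D.u (j + 1))) = ∑ j ∈ S, d j := by
        apply Finset.sum_congr rfl
        intro j hj
        have hj' : j < D.n := Finset.mem_range.mp (hS hj)
        rw [hsdef]
        simp only [dif_pos hj']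
        rw [hPin j hj' hj, hd]
      have hout : |∑ j ∈ Finset.range D.n \ S, (s j - F (D.u j) (D.u (j + 1)))| ≤ η := by
        calc |∑ j ∈ Finset.range D.n \ S, (s j - F (D.u j) (D.u (j + 1)))|
            ≤ ∑ j ∈ Finset.range D.n \ S, |s j - F (D.u j) (D.u (j + 1))| :=
              Finset.abs_sum_le_sum_abs _ _
          _ ≤ ∑ _j ∈ Finset.range D.n \ S, (η / D.n) := by
              apply Finset.sum_le_sum
              intro j hj
              obtain ⟨hjr, hjS⟩ := Finset.mem_sdiff.mp hj
              have hj' : j < D.n := Finset.mem_range.mp hjr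
              rw [hsdef]
              simp only [dif_pos hj']
              exact le_of_lt (hPout j hj' hjS)
          _ = (Finset.range D.n \ S).card * (η / D.n) := by
              rw [Finset.sum_const, nsmul_eq_mul]
          _ ≤ D.n * (η / D.n) := by
              apply mul_le_mul_of_nonneg_right _ (by positivity)
              have : (Finset.range D.n \ S).card ≤ D.n := by
                have := Finset.card_le_card (Finset.sdiff_subset (s := Finset.range D.n) (t := S))
                simpa using this
              exact_mod_cast this
          _ = η := by field_simp
      calc |∑ j ∈ S, d j| = |∑ j ∈ Finset.range D.n, (s j - F (D.u j) (D.u (j + 1))) -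
            ∑ j ∈ Finset.range D.n \ S, (s j - F (D.u j) (D.u (j + 1)))| := by
            rw [← hSd]
            congr 1
            linarith [hsplit]
        _ ≤ |∑ j ∈ Finset.range D.n, (s j - F (D.u j) (D.u (j + 1)))| +
            |∑ j ∈ Finset.range D.n \ S, (s j - F (D.u j) (D.u (j + 1)))| := abs_sub _ _
        _ < ε + η := add_lt_add_of_lt_of_le h1 hout
    by_contra hc
    push_neg at hc
    have := key (|∑ j ∈ S, d j| - ε) (by linarith)
    linarith
  constructor
  · exact part1
  · set Sp := (Finset.range D.n).filter (fun j => 0 ≤ d j) with hSp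
    set Sm := (Finset.range D.n).filter (fun j => ¬ 0 ≤ d j) with hSm
    have hsplit : ∑ j ∈ Sp, |d j| + ∑ j ∈ Sm, |d j| = ∑ j ∈ Finset.range D.n, |d j| :=
      Finset.sum_filter_add_sum_filter_not _ _ _
    have hp : ∑ j ∈ Sp, |d j| = ∑ j ∈ Sp, d j := by
      apply Finset.sum_congr rfl
      intro j hj
      exact abs_of_nonneg (Finset.mem_filter.mp hj).2
    have hm : ∑ j ∈ Sm, |d j| = -∑ j ∈ Sm, d j := by
      rw [← Finset.sum_neg_distrib]
      apply Finset.sum_congr rfl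
      intro j hj
      exact abs_of_neg (lt_of_not_ge (Finset.mem_filter.mp hj).2)
    have h1 := part1 Sp (Finset.filter_subset _ _)
    have h2 := part1 Sm (Finset.filter_subset _ _)
    have hle1 : ∑ j ∈ Sp, d j ≤ ε := le_trans (le_abs_self _) h1
    have hle2 : -∑ j ∈ Sm, d j ≤ ε := le_trans (neg_le_abs _) h2
    calc ∑ j ∈ Finset.range D.n, |d j| = ∑ j ∈ Sp, |d j| + ∑ j ∈ Sm, |d j| := hsplit.symm
      _ = ∑ j ∈ Sp, d j + -∑ j ∈ Sm, d j := by rw [hp, hm]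
      _ ≤ ε + ε := add_le_add hle1 hle2
      _ = 2 * ε := by ring
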